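/- Let Z be a positive natural number. Let Q : ℝ^Z → ℝ^Z be locally Lipschitz with a locally exponentially stable fixed point r* = Q(r*), i.e., there exist δ > 0, M > 0, α ∈ (0,1) such that ‖Q^[k](r₀) − r*‖ ≤ Mαᵏ‖r₀ − r*‖ for all r₀ with ‖r₀ − r*‖ < δ and all k ∈ ℕ. Let Ξ : ℝ^Z → ℝ^Z be a C¹ diffeomorphism (a continuously differentiable bijection with continuously differentiable inverse), set z* := Ξ(r*) and Q_z := Ξ ∘ Q ∘ Ξ⁻¹. Then the perturbed conjugated system z_{k+1} = Q_z(z_k) + d_k is locally exponentially input-to-state stable around z*: there exist ρ > 0, M' > 0, α' ∈ (0,1), and a class-K function γ such that for every disturbance sequence (d_k) with sup_k ‖d_k‖ ≤ ρ and every initial condition z₀ with ‖z₀ − z*‖ < ρ, the sequence defined by z_{k+1} = Q_z(z_k) + d_k satisfies ‖z_k − z*‖ ≤ M' (α')ᵏ ‖z₀ − z*‖ + γ(sup_k ‖d_k‖) for all k ∈ ℕ. -/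
import Mathlib


open scoped NNReal

set_option maxHeartbeats 2000000 in
/-- Lemma 4 of the paper: if the reduced-order model `r_{k+1} = Q(r_k)` has a locally
exponentially stable fixed point `r*`, and `Ξ` is a C¹ diffeomorphism, then the
conjugated dynamics `Q_z = Ξ ∘ Q ∘ Ξ⁻¹` perturbed by additive disturbances,
`z_{k+1} = Q_z(z_k) + d_k`, are locally exponentially input-to-state stable around
`z* = Ξ(r*)`. -/
theorem stmt_8
    {Z : ℕ} (hZ : 0 < Z)
    (Q : EuclideanSpace ℝ (Fin Z) → EuclideanSpace ℝ (Fin Z))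
    (hQ : LocallyLipschitz Q)
    (rstar : EuclideanSpace ℝ (Fin Z)) (hfix : Q rstar = rstar)
    (δ M α : ℝ) (hδ : 0 < δ) (hM : 0 < M) (hα : α ∈ Set.Ioo (0 : ℝ) 1)
    (hstab : ∀ r₀ : EuclideanSpace ℝ (Fin Z), ‖r₀ - rstar‖ < δ →
      ∀ k : ℕ, ‖Q^[k] r₀ - rstar‖ ≤ M * α ^ k * ‖r₀ - rstar‖)
    (Ξ Ξinv : EuclideanSpace ℝ (Fin Z) → EuclideanSpace ℝ (Fin Z))
    (hΞ : ContDiff ℝ 1 Ξ) (hΞinv : ContDiff ℝ 1 Ξinv)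
    (hleft : Function.LeftInverse Ξinv Ξ) (hright : Function.RightInverse Ξinv Ξ) :
    ∀ (zstar : EuclideanSpace ℝ (Fin Z))
      (Qz : EuclideanSpace ℝ (Fin Z) → EuclideanSpace ℝ (Fin Z)),
      zstar = Ξ rstar → Qz = Ξ ∘ Q ∘ Ξinv →
      ∃ ρ > (0 : ℝ), ∃ M' > (0 : ℝ), ∃ α' ∈ Set.Ioo (0 : ℝ) 1, ∃ γ : ℝ → ℝ,
        γ 0 = 0 ∧ StrictMonoOn γ (Set.Ici 0) ∧ ContinuousOn γ (Set.Ici 0) ∧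
        ∀ (d : ℕ → EuclideanSpace ℝ (Fin Z)),
          (∀ k : ℕ, ‖d k‖ ≤ ρ) →
          ∀ z : ℕ → EuclideanSpace ℝ (Fin Z),
            ‖z 0 - zstar‖ < ρ →
            (∀ k : ℕ, z (k + 1) = Qz (z k) + d k) →
            ∀ k : ℕ,
              ‖z k - zstar‖ ≤ M' * α' ^ k * ‖z 0 - zstar‖ + γ (⨆ j : ℕ, ‖d j‖) := by
  obtain ⟨hα0, hα1⟩ := hα
  intro zstar Qz hzstar hQz
  -- Lipschitz constant for Q near rstar
  obtain ⟨KQ, tQ, htQ, hQlipW⟩ := hQ rstar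
  obtain ⟨ε1, hε1pos, hε1sub⟩ := Metric.mem_nhds_iff.mp htQ
  set rQ : ℝ := ε1 / 2 with hrQdef
  clear_value rQ
  have hrQpos : (0 : ℝ) < rQ := by rw [hrQdef]; positivity
  have hQlip : LipschitzOnWith KQ Q (Metric.closedBall rstar rQ) :=
    hQlipW.mono ((Metric.closedBall_subset_ball (by rw [hrQdef]; linarith)).trans hε1sub)
  set L : ℝ := max (KQ : ℝ) 1 with hLdef
  clear_value L
  have hL1 : (1 : ℝ) ≤ L := by rw [hLdef]; exact le_max_right _ _
  have hL0 : (0 : ℝ) < L := lt_of_lt_of_le one_pos hL1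
  have hQL : ∀ x ∈ Metric.closedBall rstar rQ, ∀ y ∈ Metric.closedBall rstar rQ,
      ‖Q x - Q y‖ ≤ L * ‖x - y‖ := by
    intro x hx y hy
    have h := hQlip.dist_le_mul x hx y hy
    rw [dist_eq_norm, dist_eq_norm] at h
    exact h.trans (mul_le_mul_of_nonneg_right (by rw [hLdef]; exact le_max_left _ _) (norm_nonneg _))
  -- Lipschitz constant for Ξ near rstar
  obtain ⟨KX, tX, htX, hXlipW⟩ := (hΞ.contDiffAt (x := rstar)).exists_lipschitzOnWith
  obtain ⟨ε2, hε2pos, hε2sub⟩ := Metric.mem_nhds_iff.mp htX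
  set rX : ℝ := ε2 / 2 with hrXdef
  clear_value rX
  have hrXpos : (0 : ℝ) < rX := by rw [hrXdef]; positivity
  have hXlip : LipschitzOnWith KX Ξ (Metric.closedBall rstar rX) :=
    hXlipW.mono ((Metric.closedBall_subset_ball (by rw [hrXdef]; linarith)).trans hε2sub)
  set LX : ℝ := max (KX : ℝ) 1 with hLXdef
  clear_value LX
  have hLX1 : (1 : ℝ) ≤ LX := by rw [hLXdef]; exact le_max_right _ _
  have hLX0 : (0 : ℝ) < LX := lt_of_lt_of_le one_pos hLX1
  have hXL : ∀ x ∈ Metric.closedBall rstar rX, ∀ y ∈ Metric.closedBall rstar rX,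
      ‖Ξ x - Ξ y‖ ≤ LX * ‖x - y‖ := by
    intro x hx y hy
    have h := hXlip.dist_le_mul x hx y hy
    rw [dist_eq_norm, dist_eq_norm] at h
    exact h.trans (mul_le_mul_of_nonneg_right (by rw [hLXdef]; exact le_max_left _ _) (norm_nonneg _))
  -- Lipschitz constant for Ξinv near zstar
  obtain ⟨KI, tI, htI, hIlipW⟩ := (hΞinv.contDiffAt (x := zstar)).exists_lipschitzOnWith
  obtain ⟨ε3, hε3pos, hε3sub⟩ := Metric.mem_nhds_iff.mp htI
  set rI : ℝ := ε3 / 2 with hrIdef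
  clear_value rI
  have hrIpos : (0 : ℝ) < rI := by rw [hrIdef]; positivity
  have hIlip : LipschitzOnWith KI Ξinv (Metric.closedBall zstar rI) :=
    hIlipW.mono ((Metric.closedBall_subset_ball (by rw [hrIdef]; linarith)).trans hε3sub)
  set LI : ℝ := max (KI : ℝ) 1 with hLIdef
  clear_value LI
  have hLI1 : (1 : ℝ) ≤ LI := by rw [hLIdef]; exact le_max_right _ _
  have hLI0 : (0 : ℝ) < LI := lt_of_lt_of_le one_pos hLI1
  have hIL : ∀ x ∈ Metric.closedBall zstar rI, ∀ y ∈ Metric.closedBall zstar rI,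
      ‖Ξinv x - Ξinv y‖ ≤ LI * ‖x - y‖ := by
    intro x hx y hy
    have h := hIlip.dist_le_mul x hx y hy
    rw [dist_eq_norm, dist_eq_norm] at h
    exact h.trans (mul_le_mul_of_nonneg_right (by rw [hLIdef]; exact le_max_left _ _) (norm_nonneg _))
  -- choice of N with M1 * α ^ N ≤ 1/2
  set M1 : ℝ := max M 1 with hM1def
  clear_value M1
  have hM11 : (1 : ℝ) ≤ M1 := by rw [hM1def]; exact le_max_right _ _
  have hM10 : (0 : ℝ) < M1 := lt_of_lt_of_le one_pos hM11
  have hMM1 : M ≤ M1 := by rw [hM1def]; exact le_max_left _ _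
  obtain ⟨n, hn⟩ := exists_pow_lt_of_lt_one (x := 1 / (2 * M1)) (by positivity) hα1
  set N : ℕ := n + 1 with hNdef
  clear_value N
  have hN1 : 1 ≤ N := by omega
  have hαN : M1 * α ^ N ≤ 1 / 2 := by
    have h1 : α ^ N ≤ α ^ n := pow_le_pow_of_le_one hα0.le hα1.le (by omega)
    have h2 : M1 * α ^ n ≤ M1 * (1 / (2 * M1)) :=
      mul_le_mul_of_nonneg_left hn.le hM10.le
    have h3 : M1 * (1 / (2 * M1)) = 1 / 2 := by
      rw [mul_one_div, div_eq_div_iff (by positivity) (by norm_num)]; ring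
    have h4 : M1 * α ^ N ≤ M1 * α ^ n := mul_le_mul_of_nonneg_left h1 hM10.le
    linarith
  set K : ℝ := (N : ℝ) * L ^ N with hKdef
  clear_value K
  have hK1 : (1 : ℝ) ≤ K := by
    have h1 : (1 : ℝ) ≤ L ^ N := one_le_pow₀ hL1
    have h2 : (1 : ℝ) ≤ (N : ℝ) := by exact_mod_cast hN1
    rw [hKdef]
    calc (1 : ℝ) ≤ (N : ℝ) := h2
      _ ≤ (N : ℝ) * L ^ N := le_mul_of_one_le_right (by linarith) h1
  have hK0 : (0 : ℝ) ≤ K := by linarith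
  have hjK : ∀ j, j ≤ N → (j : ℝ) * L ^ j ≤ K := by
    intro j hj
    have h1 : L ^ j ≤ L ^ N := pow_le_pow_right₀ hL1 hj
    have h2 : (j : ℝ) ≤ (N : ℝ) := by exact_mod_cast hj
    have h3 : (0 : ℝ) ≤ L ^ j := pow_nonneg hL0.le j
    rw [hKdef]
    calc (j : ℝ) * L ^ j ≤ (N : ℝ) * L ^ j := mul_le_mul_of_nonneg_right h2 h3
      _ ≤ (N : ℝ) * L ^ N := mul_le_mul_of_nonneg_left h1 (by positivity)
  -- radius in r-coordinates
  set εQ : ℝ := min rQ (min (δ / 2) (min (rX / L) (rI / (2 * LX * L)))) with hεQdef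
  clear_value εQ
  have hεQpos : 0 < εQ := by
    rw [hεQdef]
    exact lt_min hrQpos (lt_min (by linarith) (lt_min (by positivity) (by positivity)))
  have hεQ1 : εQ ≤ rQ := by rw [hεQdef]; exact min_le_left _ _
  have hεQ2 : εQ ≤ δ / 2 := by
    rw [hεQdef]; exact le_trans (min_le_right _ _) (min_le_left _ _)
  have hεQ3 : L * εQ ≤ rX := by
    have h : εQ ≤ rX / L := by
      rw [hεQdef]
      exact le_trans (min_le_right _ _) (le_trans (min_le_right _ _) (min_le_left _ _))
    rw [le_div_iff₀ hL0] at h; linarith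
  have hεQ4 : LX * L * εQ ≤ rI / 2 := by
    have h : εQ ≤ rI / (2 * LX * L) := by
      rw [hεQdef]
      exact le_trans (min_le_right _ _) (le_trans (min_le_right _ _) (min_le_right _ _))
    have hpos : (0 : ℝ) < 2 * LX * L := by positivity
    rw [le_div_iff₀ hpos] at h; linarith
  have hεQX : εQ ≤ rX := by
    have h := le_mul_of_one_le_left hεQpos.le hL1
    linarith
  -- the disturbance radius ρ
  set C1 : ℝ := LI * (M1 * (1 + 2 * K) + K) + 1 with hC1def
  clear_value C1
  have hC1pos : 0 < C1 := by rw [hC1def]; positivity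
  set ρ : ℝ := min (rI / 2) (εQ / C1) with hρdef
  clear_value ρ
  have hρpos : 0 < ρ := by
    rw [hρdef]; exact lt_min (by linarith) (by positivity)
  have hρ1 : ρ ≤ rI / 2 := by rw [hρdef]; exact min_le_left _ _
  have hρ2 : ρ * C1 ≤ εQ := by
    have h : ρ ≤ εQ / C1 := by rw [hρdef]; exact min_le_right _ _
    rw [le_div_iff₀ hC1pos] at h; exact h
  set amax : ℝ := LI * ρ * (1 + 2 * K) with hamaxdef
  clear_value amax
  have hamax0 : 0 ≤ amax := by rw [hamaxdef]; positivity
  have hfit : M1 * amax + K * (LI * ρ) ≤ εQ := by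
    have h : M1 * amax + K * (LI * ρ) = ρ * (C1 - 1) := by rw [hamaxdef, hC1def]; ring
    rw [h]
    linarith [hρ2, hρpos.le]
  have hamaxεQ : amax ≤ εQ := by
    have h1 : (0 : ℝ) ≤ K * (LI * ρ) := by positivity
    have h2 : amax ≤ M1 * amax := le_mul_of_one_le_left hamax0 hM11
    linarith
  have hamaxδ : amax < δ := by linarith
  -- decay rate
  set β : ℝ := (1 / 2 : ℝ) ^ ((N : ℝ)⁻¹) with hβdef
  clear_value β
  have hNposR : (0 : ℝ) < (N : ℝ) := by exact_mod_cast hN1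
  have hβpos : 0 < β := by rw [hβdef]; exact Real.rpow_pos_of_pos (by norm_num) _
  have hβlt1 : β < 1 := by
    rw [hβdef]
    exact Real.rpow_lt_one (by norm_num) (by norm_num) (by positivity)
  -- final constants
  set M' : ℝ := 2 * LX * M1 * LI with hM'def
  clear_value M'
  have hM'pos : 0 < M' := by rw [hM'def]; positivity
  set Cγ : ℝ := LX * (2 * M1 + 1) * K * LI + 1 with hCγdef
  clear_value Cγ
  have hCγpos : 0 < Cγ := by rw [hCγdef]; positivity
  refine ⟨ρ, hρpos, M', hM'pos, β, ⟨hβpos, hβlt1⟩, fun t => Cγ * t, mul_zero _,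
    fun a _ b _ hab => (mul_lt_mul_iff_right₀ hCγpos).mpr hab,
    (continuous_const.mul continuous_id).continuousOn, ?_⟩
  intro d hd z hz0 hrec
  set s : ℝ := ⨆ j : ℕ, ‖d j‖ with hsdef
  clear_value s
  have hbdd : BddAbove (Set.range fun j : ℕ => ‖d j‖) := by
    refine ⟨ρ, ?_⟩; rintro x ⟨j, rfl⟩; exact hd j
  have hds : ∀ k : ℕ, ‖d k‖ ≤ s := by intro k; rw [hsdef]; exact le_ciSup hbdd k
  have hs0 : 0 ≤ s := le_trans (norm_nonneg _) (hds 0)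
  have hsρ : s ≤ ρ := by rw [hsdef]; exact ciSup_le hd
  set sL : ℝ := LI * s with hsLdef
  clear_value sL
  have hsL0 : 0 ≤ sL := by rw [hsLdef]; positivity
  have hsLρ : sL ≤ LI * ρ := by
    rw [hsLdef]; exact mul_le_mul_of_nonneg_left hsρ hLI0.le
  -- the r-coordinates trajectory
  set r : ℕ → EuclideanSpace ℝ (Fin Z) := fun k => Ξinv (z k) with hrdef
  clear_value r
  have hrz : ∀ k, r k = Ξinv (z k) := by intro k; rw [hrdef]
  have hzr : ∀ k, z k = Ξ (r k) := by intro k; rw [hrz]; exact (hright (z k)).symm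
  have hctr : zstar ∈ Metric.closedBall zstar rI := Metric.mem_closedBall_self hrIpos.le
  have hctrX : rstar ∈ Metric.closedBall rstar rX := Metric.mem_closedBall_self hrXpos.le
  have hctrQ : rstar ∈ Metric.closedBall rstar rQ := Metric.mem_closedBall_self hrQpos.le
  have hΞinvz : Ξinv zstar = rstar := by rw [hzstar]; exact hleft rstar
  -- initial bound
  have ha0 : ‖r 0 - rstar‖ ≤ LI * ‖z 0 - zstar‖ := by
    have hz0mem : z 0 ∈ Metric.closedBall zstar rI :=
      mem_closedBall_iff_norm.mpr (le_trans hz0.le (by linarith))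
    have h := hIL (z 0) hz0mem zstar hctr
    rw [hΞinvz] at h
    rw [hrz 0]
    exact h
  have ha0' : ‖r 0 - rstar‖ ≤ LI * ρ := by
    calc ‖r 0 - rstar‖ ≤ LI * ‖z 0 - zstar‖ := ha0
      _ ≤ LI * ρ := mul_le_mul_of_nonneg_left hz0.le hLI0.le
  -- one-step perturbation bound
  have hstep : ∀ k, ‖r k - rstar‖ ≤ εQ → ‖r (k + 1) - Q (r k)‖ ≤ sL := by
    intro k hk
    have hrkball : r k ∈ Metric.closedBall rstar rQ :=
      mem_closedBall_iff_norm.mpr (hk.trans hεQ1)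
    have hQrk : ‖Q (r k) - rstar‖ ≤ L * εQ := by
      have h := hQL (r k) hrkball rstar hctrQ
      rw [hfix] at h
      exact h.trans (mul_le_mul_of_nonneg_left hk hL0.le)
    have hQrkX : Q (r k) ∈ Metric.closedBall rstar rX :=
      mem_closedBall_iff_norm.mpr (hQrk.trans hεQ3)
    have hXQ : ‖Ξ (Q (r k)) - zstar‖ ≤ rI / 2 := by
      rw [hzstar]
      have h := hXL (Q (r k)) hQrkX rstar hctrX
      calc ‖Ξ (Q (r k)) - Ξ rstar‖ ≤ LX * ‖Q (r k) - rstar‖ := h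
        _ ≤ LX * (L * εQ) := mul_le_mul_of_nonneg_left hQrk hLX0.le
        _ ≤ rI / 2 := by linarith
    have hx1 : Ξ (Q (r k)) + d k ∈ Metric.closedBall zstar rI := by
      refine mem_closedBall_iff_norm.mpr ?_
      have htri : ‖Ξ (Q (r k)) + d k - zstar‖ ≤ ‖Ξ (Q (r k)) - zstar‖ + ‖d k‖ := by
        have h := norm_add_le (Ξ (Q (r k)) - zstar) (d k)
        rw [sub_add_eq_add_sub] at h
        exact h
      linarith [hd k]
    have hx2 : Ξ (Q (r k)) ∈ Metric.closedBall zstar rI :=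
      mem_closedBall_iff_norm.mpr (hXQ.trans (by linarith))
    have hzk1 : z (k + 1) = Ξ (Q (r k)) + d k := by
      rw [hrec k, hQz, hrz k]; rfl
    have h := hIL (Ξ (Q (r k)) + d k) hx1 (Ξ (Q (r k))) hx2
    rw [add_sub_cancel_left, hleft] at h
    have hrk1 : r (k + 1) = Ξinv (Ξ (Q (r k)) + d k) := by
      rw [hrz (k + 1), hzk1]
    rw [← hrk1] at h
    calc ‖r (k + 1) - Q (r k)‖ ≤ LI * ‖d k‖ := h
      _ ≤ sL := by rw [hsLdef]; exact mul_le_mul_of_nonneg_left (hds k) hLI0.le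
  -- the N-step lemma
  have lemA : ∀ u : ℕ → EuclideanSpace ℝ (Fin Z),
      (∀ i, ‖u i - rstar‖ ≤ εQ → ‖u (i + 1) - Q (u i)‖ ≤ sL) →
      ‖u 0 - rstar‖ ≤ amax →
      ∀ j, j ≤ N → ‖u j - rstar‖ ≤ M1 * α ^ j * ‖u 0 - rstar‖ + K * sL := by
    intro u hu hu0
    have hu0δ : ‖u 0 - rstar‖ < δ := lt_of_le_of_lt hu0 hamaxδ
    have key : ∀ j, j ≤ N → ‖u j - Q^[j] (u 0)‖ ≤ ((j : ℝ) * L ^ j) * sL := by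
      intro j
      induction j with
      | zero => intro _; simp
      | succ j ih =>
        intro hjN
        have hjN' : j ≤ N := by omega
        have hDj := ih hjN'
        have hαj : α ^ j ≤ 1 := pow_le_one₀ hα0.le hα1.le
        have hiter : ‖Q^[j] (u 0) - rstar‖ ≤ M1 * amax := by
          have h := hstab (u 0) hu0δ j
          have h2a : M * α ^ j ≤ M1 := by
            calc M * α ^ j ≤ M * 1 := mul_le_mul_of_nonneg_left hαj hM.le
              _ = M := mul_one M
              _ ≤ M1 := hMM1
          have h2 : M * α ^ j * ‖u 0 - rstar‖ ≤ M1 * amax :=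
            mul_le_mul h2a hu0 (norm_nonneg _) hM10.le
          linarith
        have hKsL : ((j : ℝ) * L ^ j) * sL ≤ K * sL :=
          mul_le_mul_of_nonneg_right (hjK j hjN') hsL0
        have hKsL' : K * sL ≤ K * (LI * ρ) := mul_le_mul_of_nonneg_left hsLρ hK0
        have htri : ‖u j - rstar‖ ≤ ‖u j - Q^[j] (u 0)‖ + ‖Q^[j] (u 0) - rstar‖ := by
          have h := norm_add_le (u j - Q^[j] (u 0)) (Q^[j] (u 0) - rstar)
          rw [sub_add_sub_cancel] at h
          exact h
        have hujball : ‖u j - rstar‖ ≤ εQ := by linarith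
        have hQjball : ‖Q^[j] (u 0) - rstar‖ ≤ εQ := by
          have h0 : (0 : ℝ) ≤ K * (LI * ρ) := by positivity
          linarith
        have hstepj := hu j hujball
        have hLipj := hQL (u j) (mem_closedBall_iff_norm.mpr (hujball.trans hεQ1))
          (Q^[j] (u 0)) (mem_closedBall_iff_norm.mpr (hQjball.trans hεQ1))
        have hiter' : Q^[j + 1] (u 0) = Q (Q^[j] (u 0)) :=
          Function.iterate_succ_apply' Q j (u 0)
        have htri2 : ‖u (j + 1) - Q^[j + 1] (u 0)‖ ≤
            ‖u (j + 1) - Q (u j)‖ + ‖Q (u j) - Q (Q^[j] (u 0))‖ := by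
          rw [hiter']
          have h := norm_add_le (u (j + 1) - Q (u j)) (Q (u j) - Q (Q^[j] (u 0)))
          rw [sub_add_sub_cancel] at h
          exact h
        have hLD : ‖Q (u j) - Q (Q^[j] (u 0))‖ ≤ L * (((j : ℝ) * L ^ j) * sL) :=
          hLipj.trans (mul_le_mul_of_nonneg_left hDj hL0.le)
        have hpow : (0 : ℝ) ≤ L ^ j := pow_nonneg hL0.le j
        have hpow1 : (1 : ℝ) ≤ L ^ (j + 1) := one_le_pow₀ hL1
        have harith : sL + L * (((j : ℝ) * L ^ j) * sL) ≤
            (((j : ℕ) + 1 : ℝ) * L ^ (j + 1)) * sL := by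
          have hc : L * (((j : ℝ) * L ^ j) * sL) = (j : ℝ) * L ^ (j + 1) * sL := by
            ring
          rw [hc]
          linarith [mul_nonneg hsL0 (sub_nonneg.mpr hpow1)]
        calc ‖u (j + 1) - Q^[j + 1] (u 0)‖
            ≤ ‖u (j + 1) - Q (u j)‖ + ‖Q (u j) - Q (Q^[j] (u 0))‖ := htri2
          _ ≤ sL + L * (((j : ℝ) * L ^ j) * sL) := add_le_add hstepj hLD
          _ ≤ (((j : ℕ) + 1 : ℝ) * L ^ (j + 1)) * sL := harith
          _ = (((j + 1 : ℕ) : ℝ) * L ^ (j + 1)) * sL := by push_cast; ring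
    intro j hjN
    have hkey := key j hjN
    have hQit := hstab (u 0) hu0δ j
    have htri : ‖u j - rstar‖ ≤ ‖u j - Q^[j] (u 0)‖ + ‖Q^[j] (u 0) - rstar‖ := by
      have h := norm_add_le (u j - Q^[j] (u 0)) (Q^[j] (u 0) - rstar)
      rw [sub_add_sub_cancel] at h
      exact h
    have h1 : ((j : ℝ) * L ^ j) * sL ≤ K * sL :=
      mul_le_mul_of_nonneg_right (hjK j hjN) hsL0
    have h2 : M * α ^ j * ‖u 0 - rstar‖ ≤ M1 * α ^ j * ‖u 0 - rstar‖ :=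
      mul_le_mul_of_nonneg_right
        (mul_le_mul_of_nonneg_right hMM1 (pow_nonneg hα0.le j)) (norm_nonneg _)
    linarith
  -- block decay
  have hblock : ∀ m : ℕ, ‖r (N * m) - rstar‖ ≤
      (1 / 2 : ℝ) ^ m * ‖r 0 - rstar‖ + 2 * K * sL := by
    intro m
    induction m with
    | zero =>
      simp only [Nat.mul_zero, pow_zero, one_mul]
      linarith [mul_nonneg (mul_nonneg (by norm_num : (0:ℝ) ≤ 2) hK0) hsL0]
    | succ m ih =>
      have hhalfm : ((1 : ℝ) / 2) ^ m ≤ 1 := pow_le_one₀ (by norm_num) (by norm_num)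
      have hu0amax : ‖r (N * m) - rstar‖ ≤ amax := by
        rw [hamaxdef]
        have e1 : (1 / 2 : ℝ) ^ m * ‖r 0 - rstar‖ ≤ ‖r 0 - rstar‖ :=
          mul_le_of_le_one_left (norm_nonneg _) hhalfm
        have e2 : 2 * K * sL ≤ 2 * K * (LI * ρ) :=
          mul_le_mul_of_nonneg_left hsLρ (by linarith)
        linarith [ih, ha0', e1, e2]
      have hA0 := lemA (fun i => r (N * m + i)) (fun i hi => hstep (N * m + i) hi)
        hu0amax N le_rfl
      have hA : ‖r (N * m + N) - rstar‖ ≤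
          M1 * α ^ N * ‖r (N * m) - rstar‖ + K * sL := hA0
      have hidx : N * m + N = N * (m + 1) := by ring
      rw [hidx] at hA
      have hx0 : (0 : ℝ) ≤ ‖r (N * m) - rstar‖ := norm_nonneg _
      have hcontr : M1 * α ^ N * ‖r (N * m) - rstar‖ ≤ (1 / 2) * ‖r (N * m) - rstar‖ :=
        mul_le_mul_of_nonneg_right hαN hx0
      have hps : ((1 : ℝ) / 2) ^ (m + 1) = (1 / 2 : ℝ) ^ m * (1 / 2) := pow_succ _ _
      have h0a : (0 : ℝ) ≤ ‖r 0 - rstar‖ := norm_nonneg _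
      rw [hps]
      linarith [hA, ih, hsL0, hK0, mul_nonneg hK0 hsL0]
  have hAm : ∀ m : ℕ, ‖r (N * m) - rstar‖ ≤ amax := by
    intro m
    have ih := hblock m
    have hhalfm : ((1 : ℝ) / 2) ^ m ≤ 1 := pow_le_one₀ (by norm_num) (by norm_num)
    rw [hamaxdef]
    have e1 : (1 / 2 : ℝ) ^ m * ‖r 0 - rstar‖ ≤ ‖r 0 - rstar‖ :=
      mul_le_of_le_one_left (norm_nonneg _) hhalfm
    have e2 : 2 * K * sL ≤ 2 * K * (LI * ρ) :=
      mul_le_mul_of_nonneg_left hsLρ (by linarith)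
    linarith [ih, ha0', e1, e2]
  -- final assembly
  intro k
  set m : ℕ := k / N with hmdef
  clear_value m
  set j : ℕ := k % N with hjdef
  clear_value j
  have hjltN : j < N := by rw [hjdef]; exact Nat.mod_lt k (by omega)
  have hkmj : N * m + j = k := by rw [hmdef, hjdef]; exact Nat.div_add_mod k N
  have hA0 := lemA (fun i => r (N * m + i)) (fun i hi => hstep (N * m + i) hi)
    (hAm m) j hjltN.le
  have hA : ‖r (N * m + j) - rstar‖ ≤
      M1 * α ^ j * ‖r (N * m) - rstar‖ + K * sL := hA0
  rw [hkmj] at hA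
  have hαj : α ^ j ≤ 1 := pow_le_one₀ hα0.le hα1.le
  have hαj0 : (0 : ℝ) ≤ α ^ j := pow_nonneg hα0.le j
  have hrNm := hblock m
  have hrNm0 : (0 : ℝ) ≤ ‖r (N * m) - rstar‖ := norm_nonneg _
  have h0a : (0 : ℝ) ≤ ‖r 0 - rstar‖ := norm_nonneg _
  -- r k bound
  have hrk : ‖r k - rstar‖ ≤
      M1 * ((1 / 2 : ℝ) ^ m * ‖r 0 - rstar‖ + 2 * K * sL) + K * sL := by
    have h1 : M1 * α ^ j * ‖r (N * m) - rstar‖ ≤ M1 * ‖r (N * m) - rstar‖ := by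
      calc M1 * α ^ j * ‖r (N * m) - rstar‖
          ≤ M1 * 1 * ‖r (N * m) - rstar‖ :=
            mul_le_mul_of_nonneg_right (mul_le_mul_of_nonneg_left hαj hM10.le) hrNm0
        _ = M1 * ‖r (N * m) - rstar‖ := by ring
    have h2 : M1 * ‖r (N * m) - rstar‖ ≤
        M1 * ((1 / 2 : ℝ) ^ m * ‖r 0 - rstar‖ + 2 * K * sL) :=
      mul_le_mul_of_nonneg_left hrNm hM10.le
    linarith
  have hrkεQ : ‖r k - rstar‖ ≤ εQ := by
    have h1 : M1 * ‖r (N * m) - rstar‖ ≤ M1 * amax :=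
      mul_le_mul_of_nonneg_left (hAm m) hM10.le
    have h2 : M1 * α ^ j * ‖r (N * m) - rstar‖ ≤ M1 * ‖r (N * m) - rstar‖ := by
      calc M1 * α ^ j * ‖r (N * m) - rstar‖
          ≤ M1 * 1 * ‖r (N * m) - rstar‖ :=
            mul_le_mul_of_nonneg_right (mul_le_mul_of_nonneg_left hαj hM10.le) hrNm0
        _ = M1 * ‖r (N * m) - rstar‖ := by ring
    have h3 : K * sL ≤ K * (LI * ρ) := mul_le_mul_of_nonneg_left hsLρ hK0
    linarith
  -- to z-coordinates
  have hzk : ‖z k - zstar‖ ≤ LX * ‖r k - rstar‖ := by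
    have h1 : r k ∈ Metric.closedBall rstar rX :=
      mem_closedBall_iff_norm.mpr (hrkεQ.trans hεQX)
    have h := hXL (r k) h1 rstar hctrX
    rw [hzr k, hzstar]
    exact h
  -- halving vs geometric rate
  have hhalf : ((1 : ℝ) / 2) ^ m ≤ 2 * β ^ k := by
    have hkN : (k : ℝ) ≤ (N : ℝ) * ((m : ℝ) + 1) := by
      have hlt : k < N * (m + 1) := by
        rw [Nat.mul_succ, ← hkmj]; exact Nat.add_lt_add_left hjltN _
      have := (Nat.cast_lt (α := ℝ)).mpr hlt
      push_cast at this
      linarith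
    have hexp : (N : ℝ)⁻¹ * (k : ℝ) - 1 ≤ (m : ℝ) := by
      rw [sub_le_iff_le_add]
      calc (N : ℝ)⁻¹ * (k : ℝ) ≤ (N : ℝ)⁻¹ * ((N : ℝ) * ((m : ℝ) + 1)) :=
            mul_le_mul_of_nonneg_left hkN (by positivity)
        _ = (m : ℝ) + 1 := by field_simp
    have h1 : ((1 : ℝ) / 2) ^ ((m : ℝ)) ≤ (1 / 2 : ℝ) ^ ((N : ℝ)⁻¹ * (k : ℝ) - 1) :=
      Real.rpow_le_rpow_of_exponent_ge (by norm_num) (by norm_num) hexp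
    rw [Real.rpow_natCast] at h1
    have h2 : ((1 : ℝ) / 2) ^ ((N : ℝ)⁻¹ * (k : ℝ) - 1) = 2 * β ^ k := by
      rw [Real.rpow_sub (by norm_num : (0 : ℝ) < 1 / 2), Real.rpow_one]
      have h3 : β ^ k = ((1 : ℝ) / 2) ^ ((N : ℝ)⁻¹ * (k : ℝ)) := by
        rw [hβdef, Real.rpow_mul (by norm_num : (0 : ℝ) ≤ 1 / 2), Real.rpow_natCast]
      rw [h3]; ring
    linarith [h2 ▸ h1]
  have hβk0 : (0 : ℝ) < β ^ k := pow_pos hβpos k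
  have hz00 : (0 : ℝ) ≤ ‖z 0 - zstar‖ := norm_nonneg _
  -- combine
  have hfin1 : ((1 : ℝ) / 2) ^ m * ‖r 0 - rstar‖ ≤ 2 * β ^ k * (LI * ‖z 0 - zstar‖) :=
    mul_le_mul hhalf ha0 h0a (by positivity)
  have hfin : ‖z k - zstar‖ ≤
      LX * (M1 * (2 * β ^ k * (LI * ‖z 0 - zstar‖) + 2 * K * sL) + K * sL) := by
    have h1 : M1 * ((1 / 2 : ℝ) ^ m * ‖r 0 - rstar‖ + 2 * K * sL) + K * sL ≤
        M1 * (2 * β ^ k * (LI * ‖z 0 - zstar‖) + 2 * K * sL) + K * sL := by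
      linarith [mul_le_mul_of_nonneg_left hfin1 hM10.le]
    have h2 : LX * ‖r k - rstar‖ ≤
        LX * (M1 * (2 * β ^ k * (LI * ‖z 0 - zstar‖) + 2 * K * sL) + K * sL) :=
      mul_le_mul_of_nonneg_left (hrk.trans h1) hLX0.le
    linarith
  have hgoal : LX * (M1 * (2 * β ^ k * (LI * ‖z 0 - zstar‖) + 2 * K * sL) + K * sL) ≤
      M' * β ^ k * ‖z 0 - zstar‖ + Cγ * s := by
    rw [hM'def, hCγdef, hsLdef]
    linarith [hs0]
  calc ‖z k - zstar‖ ≤ LX * (M1 * (2 * β ^ k * (LI * ‖z 0 - zstar‖) + 2 * K * sL) + K * sL) := hfin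
    _ ≤ M' * β ^ k * ‖z 0 - zstar‖ + Cγ * s := hgoal
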